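/- arXiv:1811.10767 — 5 statements merged into one kernel-verified Lean document; each statement's English description precedes it below -/
import Mathlib

section
/- Let m ≥ 1. For every deterministic online fractional algorithm A there exist a finite list L of nonempty traces over Fin m and an index j* ∈ Fin m such that j* ∈ T for every trace T in L (so the single set indexed by j*, with cost 1, is an offline feasible cover), and the unweighted cost of A on L satisfies ∑_j A(L)_j ≥ H_m. In other words, every online algorithm is at least H_m-competitive on some instance whose offline optimum is 1. -/
/-!
The adversary keeps a set `S` of indices that are still candidates for the optimal cover and
presents `S` itself as the next trace. Feasibility forces the algorithm to put total mass at
least `1` on `S`, so some `j ∈ S` receives at least `1 / |S|`; the adversary removes that `j`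
and continues. After `m` rounds the algorithm has paid `1/m + 1/(m-1) + ⋯ + 1 = H_m`, while the
last surviving index lies in every trace presented.
-/

/-- The `n`-th harmonic number `H_n = ∑_{k=1}^n 1/k` (with `H_0 = 0`). -/
noncomputable def harm (n : ℕ) : ℝ := ∑ k ∈ Finset.range n, (1 : ℝ) / (k + 1)

lemma harm_succ (n : ℕ) : harm (n + 1) = harm n + 1 / (n + 1) := by
  simp [harm, Finset.sum_range_succ]

lemma Finset.exists_inv_card_le_of_one_le_sum {α : Type*} {s : Finset α} {x : α → ℝ}
    (hs : s.Nonempty) (h : 1 ≤ ∑ j ∈ s, x j) : ∃ j ∈ s, 1 / (s.card : ℝ) ≤ x j := by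
  refine Finset.exists_le_of_sum_le hs (h.trans_eq' ?_)
  have : (s.card : ℝ) ≠ 0 := by exact_mod_cast hs.card_pos.ne'
  simp [Finset.sum_const, this]

lemma exists_extension_harm_card_le_sum {α : Type*} [DecidableEq α]
    {A : List (Finset α) → α → ℝ}
    (hmono : ∀ L L' : List (Finset α), L <+: L' → ∀ j, A L j ≤ A L' j)
    (hfeas : ∀ L : List (Finset α), (∀ T ∈ L, T.Nonempty) → ∀ T ∈ L, 1 ≤ ∑ j ∈ T, A L j)
    (S : Finset α) (hS : S.Nonempty) (L₀ : List (Finset α)) (hL₀ : ∀ T ∈ L₀, T.Nonempty) :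
    ∃ L j, (∀ T ∈ S :: L, j ∈ T) ∧ harm S.card ≤ ∑ i ∈ S, A (L₀ ++ S :: L) i := by
  induction S using Finset.strongInduction generalizing L₀ with
  | H S ih =>
    have hvalid : ∀ T ∈ L₀ ++ [S], T.Nonempty := by
      simpa [or_imp, forall_and] using ⟨hL₀, hS⟩
    obtain ⟨k, hkS, hk⟩ := Finset.exists_inv_card_le_of_one_le_sum hS
      (hfeas _ hvalid S (by simp))
    set S' := S.erase k
    obtain ⟨L, j, hjL, hsum⟩ : ∃ L j, (∀ T ∈ S :: L, j ∈ T) ∧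
        harm S'.card ≤ ∑ i ∈ S', A (L₀ ++ S :: L) i := by
      rcases S'.eq_empty_or_nonempty with hS' | hS'
      · exact ⟨[], k, by simpa using hkS, by simp [hS', harm]⟩
      · obtain ⟨L, j, hjL, hsum⟩ := ih S' (Finset.erase_ssubset hkS) hS' (L₀ ++ [S]) hvalid
        have hjS : j ∈ S := Finset.mem_of_mem_erase (hjL S' List.mem_cons_self)
        exact ⟨S' :: L, j, List.forall_mem_cons.mpr ⟨hjS, hjL⟩, by simpa using hsum⟩
    refine ⟨L, j, hjL, ?_⟩
    calc harm S.card = 1 / (S.card : ℝ) + harm S'.card := by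
          rw [← Finset.card_erase_add_one hkS, harm_succ]; push_cast; ring
      _ ≤ A (L₀ ++ S :: L) k + ∑ i ∈ S', A (L₀ ++ S :: L) i :=
          add_le_add (hk.trans (hmono _ _ (by simp) k)) hsum
      _ = ∑ i ∈ S, A (L₀ ++ S :: L) i := Finset.add_sum_erase _ _ hkS

theorem online_lower_bound_general (m : ℕ) (hm : 1 ≤ m)
    (A : List (Finset (Fin m)) → Fin m → ℝ)
    (hmono : ∀ L L' : List (Finset (Fin m)), L <+: L' → ∀ j, A L j ≤ A L' j)
    (hfeas : ∀ L : List (Finset (Fin m)), (∀ T ∈ L, T.Nonempty) →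
      ∀ T ∈ L, 1 ≤ ∑ j ∈ T, A L j) :
    ∃ (L : List (Finset (Fin m))) (jstar : Fin m),
      L ≠ [] ∧ (∀ T ∈ L, T.Nonempty) ∧ (∀ T ∈ L, jstar ∈ T) ∧
      harm m ≤ ∑ j, A L j := by
  have : Nonempty (Fin m) := ⟨⟨0, hm⟩⟩
  obtain ⟨L, j, hjL, hcost⟩ :=
    exists_extension_harm_card_le_sum hmono hfeas Finset.univ Finset.univ_nonempty [] (by simp)
  exact ⟨Finset.univ :: L, j, List.cons_ne_nil _ _, fun T hT => ⟨j, hjL T hT⟩, hjL,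
    by simpa using hcost⟩

/-- Lower bound for deterministic online fractional set cover: for every deterministic
online fractional algorithm `A` (nonnegative, monotone under prefix extension, and
online feasible on instances whose traces are all nonempty), there exist a nonempty
finite list `L` of nonempty membership traces over `Fin m` and an index `jstar`
belonging to every trace of `L` (so the single set `jstar`, of cost `1`, is an offline
feasible cover), such that the unweighted cost of `A` on `L` is at least `H_m`. -/
theorem online_lower_bound (m : ℕ) (hm : 1 ≤ m)
    (A : List (Finset (Fin m)) → Fin m → ℝ)
    (hpos : ∀ L j, 0 ≤ A L j)
    (hmono : ∀ L L' : List (Finset (Fin m)), L <+: L' → ∀ j, A L j ≤ A L' j)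
    (hfeas : ∀ L : List (Finset (Fin m)), (∀ T ∈ L, T.Nonempty) →
      ∀ T ∈ L, 1 ≤ ∑ j ∈ T, A L j) :
    ∃ (L : List (Finset (Fin m))) (jstar : Fin m),
      L ≠ [] ∧ (∀ T ∈ L, T.Nonempty) ∧ (∀ T ∈ L, jstar ∈ T) ∧
      harm m ≤ ∑ j, A L j :=
  online_lower_bound_general m hm A hmono hfeas
end

section
/- Let m, N ≥ 1, let x^1, …, x^N : Fin m → ℝ be vectors that are nonnegative and pointwise nondecreasing (x^i_j ≤ x^{i+1}_j for all i, j), and let j_1, …, j_N ∈ Fin m be pairwise distinct indices such that x^i_{j_i} ≥ 1/(N − i + 1) for each i = 1, …, N. Then ∑_{j ∈ Fin m} x^N_j ≥ H_N. -/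
/-- Cost accumulation: if `x 0, …, x (N-1) : Fin m → ℝ` are nonnegative vectors that are
pointwise nondecreasing in the first index, and `js 0, …, js (N-1)` are pairwise distinct
indices with `x i (js i) ≥ 1 / (N - i)` (i.e. `1/(N - i + 1)` in one-based indexing),
then the total mass of the final vector is at least `H_N`. -/
theorem cost_accumulation (m N : ℕ) (hm : 1 ≤ m) (hN : 1 ≤ N)
    (x : Fin N → Fin m → ℝ)
    (hpos : ∀ i j, 0 ≤ x i j)
    (hmono : ∀ i i' : Fin N, i ≤ i' → ∀ j, x i j ≤ x i' j)
    (js : Fin N → Fin m)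
    (hinj : Function.Injective js)
    (hval : ∀ i : Fin N, (1 : ℝ) / ((N - (i : ℕ) : ℕ) : ℝ) ≤ x i (js i)) :
    harm N ≤ ∑ j, x ⟨N - 1, by omega⟩ j := by
  have hlast : ∀ i : Fin N, i ≤ (⟨N - 1, by omega⟩ : Fin N) := by
    intro i
    exact Nat.le_pred_of_lt i.2
  have key : harm N = ∑ i : Fin N, (1 : ℝ) / ((N - (i : ℕ) : ℕ) : ℝ) := by
    rw [harm, Fin.sum_univ_eq_sum_range (fun i => (1 : ℝ) / ((N - i : ℕ) : ℝ)),
      ← Finset.sum_range_reflect (fun i => (1 : ℝ) / ((N - i : ℕ) : ℝ)) N]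
    apply Finset.sum_congr rfl
    intro k hk
    simp only [Finset.mem_range] at hk
    congr 1
    have : N - (N - 1 - k) = k + 1 := by omega
    rw [this]
    push_cast
    ring
  rw [key]
  calc ∑ i : Fin N, (1 : ℝ) / ((N - (i : ℕ) : ℕ) : ℝ)
      ≤ ∑ i : Fin N, x i (js i) := Finset.sum_le_sum fun i _ => hval i
    _ ≤ ∑ i : Fin N, x ⟨N - 1, by omega⟩ (js i) :=
        Finset.sum_le_sum fun i _ => hmono i _ (hlast i) _
    _ = ∑ j ∈ Finset.univ.image js, x ⟨N - 1, by omega⟩ j :=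
        (Finset.sum_image (fun a _ b _ h => hinj h)).symm
    _ ≤ ∑ j, x ⟨N - 1, by omega⟩ j :=
        Finset.sum_le_sum_of_subset_of_nonneg (Finset.subset_univ _)
          (fun j _ _ => hpos _ j)
end

section
/- Let m ≥ 1. For every deterministic batched fractional algorithm B there exist a finite list of batches, each of which is a singleton batch containing one nonempty trace over Fin m, and an index j* ∈ Fin m contained in every trace of every batch (so the offline optimum is 1), such that the unweighted cost of B on this list satisfies ∑_j B(list)_j ≥ H_m. -/
/-- Lower bound for deterministic batched fractional set cover via singleton batches:
for every deterministic batched fractional algorithm `B` (nonnegative, monotone under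
prefix extension, and feasible on instances whose traces are all nonempty), there exist
a nonempty finite list `L` of batches, each of which is a singleton batch containing one
nonempty trace over `Fin m`, and an index `jstar` contained in every trace of every
batch (so the offline optimum is `1`), such that the unweighted cost of `B` on `L` is
at least `H_m`. -/
theorem batched_lower_bound (m : ℕ) (hm : 1 ≤ m)
    (B : List (Finset (Finset (Fin m))) → Fin m → ℝ)
    (hpos : ∀ L j, 0 ≤ B L j)
    (hmono : ∀ L L' : List (Finset (Finset (Fin m))), L <+: L' → ∀ j, B L j ≤ B L' j)
    (hfeas : ∀ L : List (Finset (Finset (Fin m))), (∀ β ∈ L, ∀ T ∈ β, T.Nonempty) →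
      ∀ β ∈ L, ∀ T ∈ β, 1 ≤ ∑ j ∈ T, B L j) :
    ∃ (L : List (Finset (Finset (Fin m)))) (jstar : Fin m),
      L ≠ [] ∧
      (∀ β ∈ L, ∃ T : Finset (Fin m), T.Nonempty ∧ β = {T}) ∧
      (∀ β ∈ L, ∀ T ∈ β, jstar ∈ T) ∧
      harm m ≤ ∑ j, B L j := by
  -- auxiliary induction: for any alive set S of cardinality n+1 and any history L₀
  -- (all traces nonempty), there is an extension achieving harm (n+1) on S.
  have aux : ∀ n : ℕ, ∀ S : Finset (Fin m), S.card = n + 1 →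
      ∀ L₀ : List (Finset (Finset (Fin m))), (∀ β ∈ L₀, ∀ T ∈ β, T.Nonempty) →
      ∃ (ext : List (Finset (Finset (Fin m)))) (jstar : Fin m),
        ext ≠ [] ∧
        (∀ β ∈ ext, ∃ T : Finset (Fin m), T.Nonempty ∧ β = {T} ∧ jstar ∈ T) ∧
        jstar ∈ S ∧
        harm (n + 1) ≤ ∑ j ∈ S, B (L₀ ++ ext) j := by
    intro n
    induction n with
    | zero =>
      intro S hcard L₀ hL₀
      obtain ⟨a, rfl⟩ := Finset.card_eq_one.mp hcard
      refine ⟨[{({a} : Finset (Fin m))}], a, by simp, ?_, by simp, ?_⟩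
      · intro β hβ
        simp only [List.mem_singleton] at hβ
        exact ⟨{a}, ⟨a, by simp⟩, hβ, by simp⟩
      · have hne : ∀ β ∈ L₀ ++ [{({a} : Finset (Fin m))}], ∀ T ∈ β, T.Nonempty := by
          intro β hβ T hT
          rcases List.mem_append.mp hβ with h | h
          · exact hL₀ β h T hT
          · simp only [List.mem_singleton] at h
            subst h
            simp only [Finset.mem_singleton] at hT
            subst hT; exact ⟨a, by simp⟩
        have := hfeas (L₀ ++ [{({a} : Finset (Fin m))}]) hne {({a} : Finset (Fin m))}
          (by simp) {a} (by simp)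
        have h1 : harm 1 = 1 := by simp [harm]
        rw [h1]; exact this
    | succ n ih =>
      intro S hcard L₀ hL₀
      have hSne : S.Nonempty := Finset.card_pos.mp (by omega)
      set L₁ : List (Finset (Finset (Fin m))) := L₀ ++ [{S}] with hL₁
      have hne₁ : ∀ β ∈ L₁, ∀ T ∈ β, T.Nonempty := by
        intro β hβ T hT
        rcases List.mem_append.mp hβ with h | h
        · exact hL₀ β h T hT
        · simp only [List.mem_singleton] at h
          subst h
          simp only [Finset.mem_singleton] at hT
          subst hT; exact hSne
      have hfeas₁ : 1 ≤ ∑ i ∈ S, B L₁ i :=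
        hfeas L₁ hne₁ {S} (by simp [hL₁]) S (by simp)
      obtain ⟨j, hjS, hjmax⟩ := S.exists_max_image (fun i => B L₁ i) hSne
      have hbound : (1 : ℝ) / (n + 2) ≤ B L₁ j := by
        have hsum : ∑ i ∈ S, B L₁ i ≤ (n + 2 : ℝ) * B L₁ j := by
          calc ∑ i ∈ S, B L₁ i ≤ ∑ _i ∈ S, B L₁ j := Finset.sum_le_sum fun i hi => hjmax i hi
            _ = (n + 2 : ℝ) * B L₁ j := by
                rw [Finset.sum_const, hcard, nsmul_eq_mul]; push_cast; ring
        rw [div_le_iff₀ (by positivity)]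
        nlinarith
      have hcard' : (S.erase j).card = n + 1 := by
        simp [Finset.card_erase_of_mem hjS, hcard]
      obtain ⟨ext', jstar, hext'ne, hext'sing, hjstar, hharm⟩ :=
        ih (S.erase j) hcard' L₁ hne₁
      refine ⟨{S} :: ext', jstar, by simp, ?_, Finset.mem_of_mem_erase hjstar, ?_⟩
      · intro β hβ
        rcases List.mem_cons.mp hβ with h | h
        · exact ⟨S, hSne, h, Finset.mem_of_mem_erase hjstar⟩
        · exact hext'sing β h
      · have hLeq : L₀ ++ ({S} :: ext') = L₁ ++ ext' := by simp [hL₁]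
        rw [hLeq]
        have hprefix : L₁ <+: L₁ ++ ext' := List.prefix_append _ _
        have hj' : (1 : ℝ) / (n + 2) ≤ B (L₁ ++ ext') j :=
          le_trans hbound (hmono L₁ (L₁ ++ ext') hprefix j)
        have hsplit : ∑ i ∈ S.erase j, B (L₁ ++ ext') i + B (L₁ ++ ext') j
            = ∑ i ∈ S, B (L₁ ++ ext') i := Finset.sum_erase_add S _ hjS
        have hharm2 : harm (n + 2) = harm (n + 1) + 1 / (n + 2) := by
          simp only [harm, Finset.sum_range_succ]
          push_cast
          ring
        rw [show n + 1 + 1 = n + 2 from rfl, hharm2, ← hsplit]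
        have : harm (n + 1) ≤ ∑ i ∈ S.erase j, B (L₁ ++ ext') i := hharm
        linarith
  obtain ⟨k, hk⟩ : ∃ k, m = k + 1 := ⟨m - 1, by omega⟩
  obtain ⟨ext, jstar, hne, hsing, hjmem, hcost⟩ :=
    aux k Finset.univ (by simp [hk]) [] (by simp)
  refine ⟨ext, jstar, hne, fun β hβ => ?_, fun β hβ T hT => ?_, ?_⟩
  · obtain ⟨T, hT, hβT, _⟩ := hsing β hβ; exact ⟨T, hT, hβT⟩
  · obtain ⟨T', _, hβT, hjT⟩ := hsing β hβ
    subst hβT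
    simp only [Finset.mem_singleton] at hT
    subst hT; exact hjT
  · have hmk : harm m = harm (k + 1) := by rw [hk]
    rw [hmk]
    simpa using hcost
end

section
/- Fix z ∈ ℕ and m ≥ 2^z. For every deterministic batched fractional algorithm B there exist a finite list of batches β_1, …, β_{m−2^z+1} of traces over Fin m, each of which has VC-dimension at least z with respect to 𝒮, and an index j* ∈ Fin m contained in every trace of every batch (so the offline optimum is 1), such that the unweighted cost of B on this list satisfies ∑_j B(list)_j ≥ H_{m − 2^z + 1}. -/
/-- A batch `β` of traces over `Fin m` has VC-dimension at least `z` with respect to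
the collection `𝒮 = {S_1, …, S_m}`: there is `B ⊆ β` with `|B| = z` such that for every
`U ⊆ B` there exists `j : Fin m` with `{T ∈ B : j ∈ T} = U`. -/
def VCge (m z : ℕ) (β : Finset (Finset (Fin m))) : Prop :=
  ∃ B ⊆ β, B.card = z ∧ ∀ U ⊆ B, ∃ j : Fin m, B.filter (fun T => j ∈ T) = U

open Finset

namespace BatchedLowerBound

lemma harm_succ (n : ℕ) : harm (n + 1) = harm n + 1 / (n + 1) := by
  simp only [harm, sum_range_succ]

lemma exists_one_div_card_le_of_one_le_sum {ι : Type*} {s : Finset ι} {g : ι → ℝ}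
    (hs : s.Nonempty) (h : 1 ≤ ∑ j ∈ s, g j) : ∃ j ∈ s, 1 / (s.card : ℝ) ≤ g j :=
  exists_le_of_sum_le hs <| by
    rwa [sum_const, nsmul_eq_mul, mul_one_div_cancel (by exact_mod_cast hs.card_pos.ne')]

section Adversary

variable {ι : Type*} (Alg : List (Finset (Finset ι)) → ι → ℝ) (batch : Finset ι → Finset (Finset ι))

def TracesNonempty (L : List (Finset (Finset ι))) : Prop := ∀ β ∈ L, ∀ T ∈ β, T.Nonempty

lemma tracesNonempty_append_batch (hsub : ∀ A, ∀ T ∈ batch A, A ⊆ T)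
    {L₀ : List (Finset (Finset ι))} (hL₀ : TracesNonempty L₀) {A : Finset ι} (hA : A.Nonempty) :
    TracesNonempty (L₀ ++ [batch A]) := by
  simp only [TracesNonempty, List.mem_append, List.mem_singleton]
  rintro β (hβ | rfl) T hT
  exacts [hL₀ β hβ T hT, hA.mono (hsub A T hT)]

lemma one_le_sum_append_batch
    (hfeas : ∀ L, TracesNonempty L → ∀ β ∈ L, ∀ T ∈ β, 1 ≤ ∑ j ∈ T, Alg L j)
    (hself : ∀ A, A ∈ batch A) (hsub : ∀ A, ∀ T ∈ batch A, A ⊆ T)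
    {L₀ : List (Finset (Finset ι))} (hL₀ : TracesNonempty L₀) {A : Finset ι} (hA : A.Nonempty) :
    1 ≤ ∑ j ∈ A, Alg (L₀ ++ [batch A]) j :=
  hfeas _ (tracesNonempty_append_batch batch hsub hL₀ hA) _
    (List.mem_append_right _ (List.mem_singleton_self _)) A (hself A)

theorem exists_batches_harm_le_sum [DecidableEq ι]
    (hmono : ∀ L L' : List (Finset (Finset ι)), L <+: L' → ∀ j, Alg L j ≤ Alg L' j)
    (hfeas : ∀ L, TracesNonempty L → ∀ β ∈ L, ∀ T ∈ β, 1 ≤ ∑ j ∈ T, Alg L j)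
    (hself : ∀ A, A ∈ batch A) (hsub : ∀ A, ∀ T ∈ batch A, A ⊆ T) (k : ℕ)
    (A : Finset ι) (hA : A.card = k + 1) (L₀ : List (Finset (Finset ι)))
    (hL₀ : TracesNonempty L₀) :
    ∃ (L : List (Finset (Finset ι))) (jstar : ι), L.length = k + 1 ∧ jstar ∈ A ∧
      (∀ β ∈ L, ∃ B ⊆ A, jstar ∈ B ∧ β = batch B) ∧
      harm (k + 1) ≤ ∑ j ∈ A, Alg (L₀ ++ L) j := by
  induction k generalizing A L₀ with
  | zero =>
    obtain ⟨a, rfl⟩ := card_eq_one.1 hA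
    have hcover := one_le_sum_append_batch Alg batch hfeas hself hsub hL₀ (singleton_nonempty a)
    refine ⟨[batch {a}], a, rfl, mem_singleton_self a, ?_, by simpa [harm] using hcover⟩
    simp only [List.mem_singleton, forall_eq]
    exact ⟨{a}, subset_refl _, mem_singleton_self a, rfl⟩
  | succ k ih =>
    have hAne : A.Nonempty := card_pos.1 (by omega)
    obtain ⟨j₀, hj₀, hmass⟩ := exists_one_div_card_le_of_one_le_sum hAne
      (one_le_sum_append_batch Alg batch hfeas hself hsub hL₀ hAne)
    obtain ⟨L, jstar, hlen, hjstar, hbatches, hcost⟩ :=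
      ih (A.erase j₀) (by rw [card_erase_of_mem hj₀, hA]; rfl) (L₀ ++ [batch A])
        (tracesNonempty_append_batch batch hsub hL₀ hAne)
    have happend : L₀ ++ batch A :: L = L₀ ++ [batch A] ++ L := by simp
    refine ⟨batch A :: L, jstar, by simp [hlen], mem_of_mem_erase hjstar, ?_, ?_⟩
    · simp only [List.mem_cons, forall_eq_or_imp]
      refine ⟨⟨A, subset_refl _, mem_of_mem_erase hjstar, rfl⟩, fun β hβ => ?_⟩
      obtain ⟨B, hB, hjB, rfl⟩ := hbatches β hβ
      exact ⟨B, hB.trans (erase_subset _ _), hjB, rfl⟩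
    · have hmass' : 1 / ((k + 1 : ℕ) + 1 : ℝ) ≤ Alg (L₀ ++ [batch A] ++ L) j₀ :=
        (show _ ≤ _ by simpa [hA] using hmass).trans (hmono _ _ (List.prefix_append _ _) j₀)
      rw [happend, ← add_sum_erase A _ hj₀, harm_succ]
      linarith

end Adversary

section Shattering

variable {ι κ : Type*} [DecidableEq ι] [Fintype κ] (col : Finset κ ↪ ι)

section

variable [DecidableEq κ]

def shatterTrace (A : Finset ι) (i : κ) : Finset ι := A ∪ (univ.filter (i ∈ ·)).map col

def shatterBatch (A : Finset ι) : Finset (Finset ι) := insert A (univ.image (shatterTrace col A))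

lemma mem_shatterBatch_self (A : Finset ι) : A ∈ shatterBatch col A := mem_insert_self _ _

lemma subset_of_mem_shatterBatch (A : Finset ι) : ∀ T ∈ shatterBatch col A, A ⊆ T := by
  simp only [shatterBatch, mem_insert, mem_image, mem_univ, true_and]
  rintro T (rfl | ⟨i, rfl⟩)
  exacts [subset_refl _, subset_union_left]

end

variable [Fintype ι]

def freeColumns : Finset ι := insert (col univ) (univ.map col)ᶜ

lemma card_freeColumns :
    (freeColumns col).card = Fintype.card ι - 2 ^ Fintype.card κ + 1 := by
  rw [freeColumns, card_insert_of_notMem (by simp), card_compl, card_map, card_univ,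
    Fintype.card_finset]

variable [DecidableEq κ] {col}

lemma col_mem_shatterTrace {A : Finset ι} (hA : A ⊆ freeColumns col) (V : Finset κ) (i : κ) :
    col V ∈ shatterTrace col A i ↔ i ∈ V := by
  refine ⟨fun h => ?_, fun h => mem_union_right _ (mem_map_of_mem col (by simpa using h))⟩
  rcases mem_union.1 h with hV | hV
  · rcases mem_insert.1 (hA hV) with hV | hV
    · rw [col.injective hV]; exact mem_univ i
    · exact absurd (mem_map_of_mem col (mem_univ V)) (mem_compl.1 hV)
  · obtain ⟨U, hU, hUV⟩ := mem_map.1 hV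
    rw [← col.injective hUV]
    simpa using hU

lemma shatterTrace_injective {A : Finset ι} (hA : A ⊆ freeColumns col) :
    Function.Injective (shatterTrace col A) := by
  intro i i' h
  have : i' ∈ ({i} : Finset κ) := by
    rw [← col_mem_shatterTrace hA, ← h, col_mem_shatterTrace hA]
    exact mem_singleton_self i
  exact (mem_singleton.1 this).symm

lemma filter_col_mem_shatterTrace {A : Finset ι} (hA : A ⊆ freeColumns col)
    {U : Finset (Finset ι)} (hU : U ⊆ univ.image (shatterTrace col A)) :
    (univ.image (shatterTrace col A)).filter (col {i | shatterTrace col A i ∈ U} ∈ ·) = U := by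
  ext T
  simp only [mem_filter, mem_image, mem_univ, true_and]
  constructor
  · rintro ⟨⟨i, rfl⟩, hcol⟩
    simpa using (col_mem_shatterTrace hA _ i).1 hcol
  · intro hT
    obtain ⟨i, -, rfl⟩ := mem_image.1 (hU hT)
    exact ⟨⟨i, rfl⟩, (col_mem_shatterTrace hA _ i).2 (by simpa using hT)⟩

lemma vcge_shatterBatch {m z : ℕ} {col : Finset (Fin z) ↪ Fin m} {A : Finset (Fin m)}
    (hA : A ⊆ freeColumns col) : VCge m z (shatterBatch col A) :=
  ⟨univ.image (shatterTrace col A), subset_insert _ _,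
    by rw [card_image_of_injective _ (shatterTrace_injective hA), card_univ, Fintype.card_fin],
    fun _ hU => ⟨_, filter_col_mem_shatterTrace hA hU⟩⟩

end Shattering

end BatchedLowerBound

open BatchedLowerBound in
/-- Lower bound against a VC-dimension restricted adversary: fix `z` and `m ≥ 2^z`.
For every deterministic batched fractional algorithm `Alg` (nonnegative, monotone under
prefix extension, and feasible on instances whose traces are all nonempty), there exist
a finite list `L` of `m - 2^z + 1` batches of traces over `Fin m`, each of
VC-dimension at least `z`, and an index `jstar` contained in every trace of every batch
(so the offline optimum is `1`), such that the unweighted cost of `Alg` on `L` is at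
least `H_{m - 2^z + 1}`. -/
theorem batched_restricted_lower_bound (z m : ℕ) (hm : 2 ^ z ≤ m)
    (Alg : List (Finset (Finset (Fin m))) → Fin m → ℝ)
    (hpos : ∀ L j, 0 ≤ Alg L j)
    (hmono : ∀ L L' : List (Finset (Finset (Fin m))), L <+: L' → ∀ j, Alg L j ≤ Alg L' j)
    (hfeas : ∀ L : List (Finset (Finset (Fin m))), (∀ β ∈ L, ∀ T ∈ β, T.Nonempty) →
      ∀ β ∈ L, ∀ T ∈ β, 1 ≤ ∑ j ∈ T, Alg L j) :
    ∃ (L : List (Finset (Finset (Fin m)))) (jstar : Fin m),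
      L.length = m - 2 ^ z + 1 ∧
      (∀ β ∈ L, VCge m z β) ∧
      (∀ β ∈ L, ∀ T ∈ β, jstar ∈ T) ∧
      harm (m - 2 ^ z + 1) ≤ ∑ j, Alg L j := by
  obtain ⟨col⟩ : Nonempty (Finset (Fin z) ↪ Fin m) :=
    Function.Embedding.nonempty_of_card_le (by simpa using hm)
  obtain ⟨L, jstar, hlen, -, hbatches, hcost⟩ :=
    exists_batches_harm_le_sum Alg (shatterBatch col) hmono hfeas (mem_shatterBatch_self col)
      (subset_of_mem_shatterBatch col) (m - 2 ^ z) (freeColumns col)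
      (by simpa using card_freeColumns col) [] (by simp [TracesNonempty])
  refine ⟨L, jstar, hlen, fun β hβ => ?_, fun β hβ T hT => ?_, ?_⟩
  · obtain ⟨B, hB, -, rfl⟩ := hbatches β hβ
    exact vcge_shatterBatch hB
  · obtain ⟨B, -, hjB, rfl⟩ := hbatches β hβ
    exact subset_of_mem_shatterBatch col B T hT hjB
  · calc harm (m - 2 ^ z + 1) ≤ ∑ j ∈ freeColumns col, Alg L j := by simpa using hcost
      _ ≤ ∑ j, Alg L j := Finset.sum_le_univ_sum_of_nonneg (hpos L)
end

section
/- Fix m ≥ 1, a cost vector c : Fin m → ℝ with c_j > 0 for all j, and an integer d ≥ 1. There exists a deterministic online fractional algorithm A (nonnegative, monotone under prefix extension, and online feasible) such that for every finite list L of nonempty traces over Fin m each of cardinality at most d, the weighted cost of A satisfies ∑_j c_j · A(L)_j ≤ 2 · ln(1 + d) · OPT_f^c(L), where OPT_f^c(L) is the infimum of ∑_j c_j x_j over all vectors x feasible for L. That is, there is a 2·ln(1+d)-competitive deterministic algorithm for the fractional online set cover problem, where d is the maximum number of sets containing any single requested element. -/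
/-!
A continuous-time version of the primal–dual scheme of Buchbinder and Naor. Each set `j` carries a
dual load `Y_j`, the total dual value of the arrived elements it contains, and the algorithm plays
`x_j = ((1 + d) ^ (Y_j / c_j) - 1) / d`. When an uncovered element `T` arrives, its dual value is
raised until `T` is covered. Meanwhile the primal cost grows at rate
`log (1 + d) (∑_{j ∈ T} x_j + |T| / d) ≤ 2 log (1 + d)`, so the primal cost is at most
`2 log (1 + d)` times the dual objective. No `x_j` exceeds `1` before `T` is covered, so
`Y_j ≤ c_j` throughout: the dual solution is feasible, and weak duality bounds its objective by
the fractional optimum.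
-/

/-- `x : Fin m → ℝ` is feasible for the instance `L` (a finite list of membership
traces): `x` is nonnegative and `∑_{j ∈ T} x_j ≥ 1` for every trace `T` in `L`. -/
def Feasible (m : ℕ) (x : Fin m → ℝ) (L : List (Finset (Fin m))) : Prop :=
  (∀ j, 0 ≤ x j) ∧ ∀ T ∈ L, 1 ≤ ∑ j ∈ T, x j

/-- The weighted fractional optimum of an instance `L` with cost vector `c`:
the infimum of `∑_j c_j x_j` over all `x` feasible for `L`. -/
noncomputable def OPTfc (m : ℕ) (c : Fin m → ℝ) (L : List (Finset (Fin m))) : ℝ :=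
  sInf {y | ∃ x : Fin m → ℝ, Feasible m x L ∧ y = ∑ j, c j * x j}

namespace OnlineSetCover

open Finset

/-- The solution of `x' = (log (1 + d) / c) (x + 1 / d)` with `x 0 = 0`, the continuous form of
the multiplicative update of Buchbinder and Naor; it reaches `1` exactly at `y = c`. -/
noncomputable def potential (d : ℕ) (c y : ℝ) : ℝ :=
  (Real.exp (y / c * Real.log (1 + d)) - 1) / d

section Potential

variable {d : ℕ} {c y : ℝ}

lemma log_one_add_pos (hd : 0 < d) : 0 < Real.log (1 + (d : ℝ)) :=
  Real.log_pos (lt_add_of_pos_right 1 (Nat.cast_pos.2 hd))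

@[simp]
lemma potential_zero : potential d c 0 = 0 := by simp [potential]

lemma potential_self (hd : 0 < d) (hc : 0 < c) : potential d c c = 1 := by
  have hd' : (0 : ℝ) < d := Nat.cast_pos.2 hd
  rw [potential, div_self hc.ne', one_mul, Real.exp_log (by positivity), add_sub_cancel_left,
    div_self hd'.ne']

lemma strictMono_potential (hd : 0 < d) (hc : 0 < c) : StrictMono (potential d c) := by
  have := log_one_add_pos hd
  have hd' : (0 : ℝ) < d := Nat.cast_pos.2 hd
  intro a b hab
  unfold potential
  gcongr

lemma potential_nonneg (hd : 0 < d) (hc : 0 < c) (hy : 0 ≤ y) : 0 ≤ potential d c y := by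
  simpa using (strictMono_potential hd hc).monotone hy

lemma potential_lt_one_iff (hd : 0 < d) (hc : 0 < c) : potential d c y < 1 ↔ y < c := by
  rw [← potential_self hd hc]
  exact (strictMono_potential hd hc).lt_iff_lt

lemma continuous_potential : Continuous (potential d c) := by
  unfold potential
  fun_prop

lemma hasDerivAt_potential (y : ℝ) :
    HasDerivAt (potential d c) (Real.log (1 + d) / c * (potential d c y + 1 / d)) y := by
  refine (((((hasDerivAt_id' y).div_const c).mul_const (Real.log (1 + d))).exp.sub_const
    1).div_const (d : ℝ)).congr_deriv ?_
  rw [potential, ← add_div, sub_add_cancel]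
  ring

end Potential

section Raise

variable {ι : Type*} [DecidableEq ι] {T : Finset ι} {t : ℝ} {Y : ι → ℝ}

def raise (T : Finset ι) (t : ℝ) (Y : ι → ℝ) : ι → ℝ :=
  fun j => if j ∈ T then Y j + t else Y j

lemma raise_of_mem {j : ι} (hj : j ∈ T) : raise T t Y j = Y j + t := if_pos hj

lemma le_raise (ht : 0 ≤ t) (j : ι) : Y j ≤ raise T t Y j := by
  unfold raise
  split_ifs <;> linarith

lemma sum_raise_sub [Fintype ι] (f : ι → ℝ → ℝ) :
    ∑ j, f j (raise T t Y j) - ∑ j, f j (Y j) =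
      ∑ j ∈ T, f j (Y j + t) - ∑ j ∈ T, f j (Y j) := by
  rw [← sum_sub_distrib, ← sum_sub_distrib, ← sum_ite_mem_eq T]
  refine sum_congr rfl fun j _ => ?_
  unfold raise
  split_ifs <;> simp

end Raise

section Increment

variable {ι : Type*} {d : ℕ} {c Y : ι → ℝ} {T : Finset ι} {t : ℝ}

lemma sum_mul_potential_add_sub_le (hd : 0 < d) (hc : ∀ j, 0 < c j) (hT : T.card ≤ d)
    (ht : 0 ≤ t) (hcov : ∀ s ∈ Set.Ico 0 t, ∑ j ∈ T, potential d (c j) (Y j + s) < 1) :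
    ∑ j ∈ T, c j * potential d (c j) (Y j + t) - ∑ j ∈ T, c j * potential d (c j) (Y j) ≤
      2 * Real.log (1 + d) * t := by
  set P : ℝ → ℝ := fun s => ∑ j ∈ T, c j * potential d (c j) (Y j + s)
  have hP : ∀ s, HasDerivAt P
      (Real.log (1 + d) * ∑ j ∈ T, (potential d (c j) (Y j + s) + 1 / d)) s := by
    intro s
    rw [mul_sum]
    refine HasDerivAt.fun_sum fun j _ => ?_
    refine (((hasDerivAt_potential (d := d) (c := c j) (Y j + s)).comp s
      ((hasDerivAt_id s).const_add (Y j))).const_mul (c j)).congr_deriv ?_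
    field_simp [(hc j).ne']
  have hbound : ∀ s ∈ Set.Ico 0 t,
      Real.log (1 + d) * ∑ j ∈ T, (potential d (c j) (Y j + s) + 1 / d) ≤
        2 * Real.log (1 + d) := by
    intro s hs
    have hcard : ∑ _j ∈ T, (1 / d : ℝ) ≤ 1 := by
      rw [sum_const, nsmul_eq_mul, mul_one_div, div_le_one (Nat.cast_pos.2 hd)]
      exact_mod_cast hT
    rw [sum_add_distrib, mul_comm 2]
    exact mul_le_mul_of_nonneg_left (by linarith [hcov s hs]) (log_one_add_pos hd).le
  have hmvt := (convex_Icc 0 t).image_sub_le_mul_sub_of_deriv_le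
    (fun s _ => (hP s).continuousAt.continuousWithinAt)
    (fun s _ => (hP s).differentiableAt.differentiableWithinAt)
    (fun s hs => by
      rw [interior_Icc] at hs
      exact (hP s).deriv ▸ hbound s (Set.Ioo_subset_Ico_self hs))
    0 (Set.left_mem_Icc.2 ht) t (Set.right_mem_Icc.2 ht) ht
  simpa [P] using hmvt

end Increment

section HittingTime

variable {ι : Type*} {d : ℕ} {c Y : ι → ℝ} {T : Finset ι} {s : ℝ}

def coveringTimes (d : ℕ) (c Y : ι → ℝ) (T : Finset ι) : Set ℝ :=
  {t | 0 ≤ t ∧ 1 ≤ ∑ j ∈ T, potential d (c j) (Y j + t)}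

/-- This is `0` if `T` is already covered, and also, as `sInf ∅ = 0`, if `T = ∅`. -/
noncomputable def hittingTime (d : ℕ) (c Y : ι → ℝ) (T : Finset ι) : ℝ :=
  sInf (coveringTimes d c Y T)

lemma bddBelow_coveringTimes : BddBelow (coveringTimes d c Y T) := ⟨0, fun _ ht => ht.1⟩

lemma isClosed_coveringTimes : IsClosed (coveringTimes d c Y T) :=
  (isClosed_le continuous_const continuous_id).inter <| isClosed_le continuous_const <|
    continuous_finsetSum _ fun _ _ => continuous_potential.comp (continuous_const_add _)

lemma coveringTimes_nonempty (hd : 0 < d) (hc : ∀ j, 0 < c j) (hY : ∀ j, 0 ≤ Y j)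
    (hT : T.Nonempty) : (coveringTimes d c Y T).Nonempty := by
  obtain ⟨i, hi⟩ := hT
  refine ⟨c i, (hc i).le, ?_⟩
  calc 1 = potential d (c i) (c i) := (potential_self hd (hc i)).symm
    _ ≤ potential d (c i) (Y i + c i) :=
      (strictMono_potential hd (hc i)).monotone (le_add_of_nonneg_left (hY i))
    _ ≤ ∑ j ∈ T, potential d (c j) (Y j + c i) :=
      single_le_sum (fun j _ => potential_nonneg hd (hc j) (add_nonneg (hY j) (hc i).le)) hi

lemma hittingTime_nonneg : 0 ≤ hittingTime d c Y T := Real.sInf_nonneg fun _ ht => ht.1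

lemma sum_potential_lt_one_of_lt_hittingTime (hs : s ∈ Set.Ico 0 (hittingTime d c Y T)) :
    ∑ j ∈ T, potential d (c j) (Y j + s) < 1 :=
  not_le.1 fun h => notMem_of_lt_csInf hs.2 bddBelow_coveringTimes ⟨hs.1, h⟩

lemma one_le_sum_potential_hittingTime (hd : 0 < d) (hc : ∀ j, 0 < c j) (hY : ∀ j, 0 ≤ Y j)
    (hT : T.Nonempty) : 1 ≤ ∑ j ∈ T, potential d (c j) (Y j + hittingTime d c Y T) :=
  (isClosed_coveringTimes.csInf_mem (coveringTimes_nonempty hd hc hY hT)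
    bddBelow_coveringTimes).2

end HittingTime

section Algorithm

variable {ι : Type*} [DecidableEq ι] {d : ℕ} {c Y x : ι → ℝ} {T : Finset ι}

noncomputable def dualStep (d : ℕ) (c Y : ι → ℝ) (T : Finset ι) : ι → ℝ :=
  raise T (hittingTime d c Y T) Y

noncomputable def dualRun (d : ℕ) (c Y : ι → ℝ) (L : List (Finset ι)) : ι → ℝ :=
  L.foldl (dualStep d c) Y

@[simp]
lemma dualRun_nil : dualRun d c Y [] = Y := rfl

@[simp]
lemma dualRun_cons (L : List (Finset ι)) :
    dualRun d c Y (T :: L) = dualRun d c (dualStep d c Y T) L := rfl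

lemma dualRun_append (L L' : List (Finset ι)) :
    dualRun d c Y (L ++ L') = dualRun d c (dualRun d c Y L) L' :=
  List.foldl_append

lemma le_dualStep (j : ι) : Y j ≤ dualStep d c Y T j := le_raise hittingTime_nonneg j

/-- Dual feasibility `Y ≤ c` is preserved: a set with `Y j + s ≥ c j` would by itself
have covered `T` before time `s`. -/
lemma dualStep_le (hd : 0 < d) (hc : ∀ j, 0 < c j) (hY : ∀ j, 0 ≤ Y j)
    (hYc : ∀ j, Y j ≤ c j) (j : ι) : dualStep d c Y T j ≤ c j := by
  by_cases hj : j ∈ T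
  · rw [dualStep, raise_of_mem hj, ← le_sub_iff_add_le']
    refine le_of_forall_lt_imp_le_of_dense fun s hs => ?_
    rcases lt_or_ge s 0 with hs0 | hs0
    · linarith [hYc j]
    · have hcov := sum_potential_lt_one_of_lt_hittingTime ⟨hs0, hs⟩
      have hj_lt : potential d (c j) (Y j + s) < 1 := lt_of_le_of_lt
        (single_le_sum (fun i _ => potential_nonneg hd (hc i) (add_nonneg (hY i) hs0)) hj) hcov
      linarith [(potential_lt_one_iff hd (hc j)).1 hj_lt]
  · simpa [dualStep, raise, hj] using hYc j

lemma one_le_sum_potential_dualStep (hd : 0 < d) (hc : ∀ j, 0 < c j) (hY : ∀ j, 0 ≤ Y j)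
    (hT : T.Nonempty) : 1 ≤ ∑ j ∈ T, potential d (c j) (dualStep d c Y T j) :=
  calc 1 ≤ ∑ j ∈ T, potential d (c j) (Y j + hittingTime d c Y T) :=
        one_le_sum_potential_hittingTime hd hc hY hT
    _ = ∑ j ∈ T, potential d (c j) (dualStep d c Y T j) :=
        sum_congr rfl fun j hj => by rw [dualStep, raise_of_mem hj]

variable [Fintype ι]

lemma sum_mul_potential_dualStep_le (hd : 0 < d) (hc : ∀ j, 0 < c j) (hT : T.card ≤ d) :
    ∑ j, c j * potential d (c j) (dualStep d c Y T j) ≤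
      ∑ j, c j * potential d (c j) (Y j) + 2 * Real.log (1 + d) * hittingTime d c Y T := by
  have hraise := sum_raise_sub (T := T) (t := hittingTime d c Y T) (Y := Y)
    fun j y => c j * potential d (c j) y
  have hinc := sum_mul_potential_add_sub_le hd hc hT hittingTime_nonneg
    fun _ hs => sum_potential_lt_one_of_lt_hittingTime (Y := Y) hs
  rw [dualStep]
  linarith

lemma hittingTime_le_sum_mul_dualStep_sub (hxT : 1 ≤ ∑ j ∈ T, x j) :
    hittingTime d c Y T ≤ ∑ j, x j * dualStep d c Y T j - ∑ j, x j * Y j := by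
  have hraise := sum_raise_sub (T := T) (t := hittingTime d c Y T) (Y := Y) fun j y => x j * y
  simp only [mul_add, sum_add_distrib, ← sum_mul] at hraise
  rw [dualStep, hraise, add_sub_cancel_left]
  exact le_mul_of_one_le_left hittingTime_nonneg hxT

end Algorithm

section Run

variable {ι : Type*} [DecidableEq ι] {d : ℕ} {c x : ι → ℝ}

lemma le_dualRun (L : List (Finset ι)) (Y : ι → ℝ) (j : ι) : Y j ≤ dualRun d c Y L j := by
  induction L generalizing Y with
  | nil => rfl
  | cons T L ih => exact (le_dualStep j).trans (ih _)

lemma dualRun_le (hd : 0 < d) (hc : ∀ j, 0 < c j) (L : List (Finset ι)) {Y : ι → ℝ}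
    (hY : ∀ j, 0 ≤ Y j) (hYc : ∀ j, Y j ≤ c j) (j : ι) : dualRun d c Y L j ≤ c j := by
  induction L generalizing Y with
  | nil => exact hYc j
  | cons T L ih =>
    exact ih (fun j => (hY j).trans (le_dualStep j)) (dualStep_le hd hc hY hYc)

lemma one_le_sum_potential_dualRun (hd : 0 < d) (hc : ∀ j, 0 < c j) {L : List (Finset ι)}
    {Y : ι → ℝ} (hY : ∀ j, 0 ≤ Y j) {T : Finset ι} (hTL : T ∈ L) (hT : T.Nonempty) :
    1 ≤ ∑ j ∈ T, potential d (c j) (dualRun d c Y L j) := by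
  induction L generalizing Y with
  | nil => cases hTL
  | cons T' L ih =>
    rcases List.mem_cons.1 hTL with rfl | hTL
    · exact (one_le_sum_potential_dualStep hd hc hY hT).trans <| sum_le_sum fun j _ =>
        (strictMono_potential hd (hc j)).monotone (le_dualRun L _ j)
    · exact ih (fun j => (hY j).trans (le_dualStep j)) hTL

variable [Fintype ι]

lemma sum_mul_potential_dualRun_le (hd : 0 < d) (hc : ∀ j, 0 < c j) {L : List (Finset ι)}
    (hL : ∀ T ∈ L, T.card ≤ d) (hx : ∀ T ∈ L, 1 ≤ ∑ j ∈ T, x j) (Y : ι → ℝ) :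
    ∑ j, c j * potential d (c j) (dualRun d c Y L j) ≤
      ∑ j, c j * potential d (c j) (Y j) +
        2 * Real.log (1 + d) * (∑ j, x j * dualRun d c Y L j - ∑ j, x j * Y j) := by
  induction L generalizing Y with
  | nil => simp
  | cons T L ih =>
    have hstep := sum_mul_potential_dualStep_le (Y := Y) hd hc (hL T List.mem_cons_self)
    have hdual := hittingTime_le_sum_mul_dualStep_sub (c := c) (d := d) (Y := Y)
      (hx T List.mem_cons_self)
    have hrest := ih (fun T hT => hL T (List.mem_cons_of_mem _ hT))
      (fun T hT => hx T (List.mem_cons_of_mem _ hT)) (dualStep d c Y T)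
    have hlog : 0 ≤ 2 * Real.log (1 + d) := by linarith [log_one_add_pos hd]
    rw [dualRun_cons]
    linarith [mul_le_mul_of_nonneg_left hdual hlog]

end Run

variable {m d : ℕ} {c : Fin m → ℝ} {L : List (Finset (Fin m))}

lemma feasible_one (hL : ∀ T ∈ L, T.Nonempty) : Feasible m (fun _ => 1) L :=
  ⟨fun _ => zero_le_one, fun T hT => by simpa using (hL T hT).card_pos⟩

lemma le_mul_OPTfc {a k : ℝ} (hk : 0 < k) (hL : ∀ T ∈ L, T.Nonempty)
    (h : ∀ x, Feasible m x L → a ≤ k * ∑ j, c j * x j) : a ≤ k * OPTfc m c L := by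
  rw [← div_le_iff₀' hk]
  refine le_csInf ⟨_, fun _ => 1, feasible_one hL, rfl⟩ ?_
  rintro _ ⟨x, hx, rfl⟩
  rw [div_le_iff₀' hk]
  exact h x hx

lemma sum_mul_potential_dualRun_zero_le (hd : 0 < d) (hc : ∀ j, 0 < c j)
    (hL : ∀ T ∈ L, T.card ≤ d) {x : Fin m → ℝ} (hx : Feasible m x L) :
    ∑ j, c j * potential d (c j) (dualRun d c 0 L j) ≤
      2 * Real.log (1 + d) * ∑ j, c j * x j := by
  have hlog : 0 ≤ 2 * Real.log (1 + d) := by linarith [log_one_add_pos hd]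
  calc ∑ j, c j * potential d (c j) (dualRun d c 0 L j)
      ≤ 2 * Real.log (1 + d) * ∑ j, x j * dualRun d c 0 L j := by
        simpa using sum_mul_potential_dualRun_le hd hc hL hx.2 0
    _ ≤ 2 * Real.log (1 + d) * ∑ j, c j * x j := by
        refine mul_le_mul_of_nonneg_left (sum_le_sum fun j _ => ?_) hlog
        rw [mul_comm (c j)]
        exact mul_le_mul_of_nonneg_left
          (dualRun_le hd hc L (fun _ => le_rfl) (fun j => (hc j).le) j) (hx.1 j)

end OnlineSetCover

open OnlineSetCover

theorem online_fractional_competitive_general (m d : ℕ) (hd : 1 ≤ d)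
    (c : Fin m → ℝ) (hc : ∀ j, 0 < c j) :
    ∃ A : List (Finset (Fin m)) → Fin m → ℝ,
      (∀ L j, 0 ≤ A L j) ∧
      (∀ L L' : List (Finset (Fin m)), L <+: L' → ∀ j, A L j ≤ A L' j) ∧
      (∀ L : List (Finset (Fin m)), (∀ T ∈ L, T.Nonempty) → Feasible m (A L) L) ∧
      ∀ L : List (Finset (Fin m)), (∀ T ∈ L, T.Nonempty ∧ T.card ≤ d) →
        ∑ j, c j * A L j ≤ 2 * Real.log (1 + (d : ℝ)) * OPTfc m c L := by
  have hA : ∀ L j, 0 ≤ potential d (c j) (dualRun d c 0 L j) := fun L j =>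
    potential_nonneg hd (hc j) (le_dualRun L 0 j)
  refine ⟨fun L j => potential d (c j) (dualRun d c 0 L j), hA, ?_, fun L hL => ⟨hA L, ?_⟩, ?_⟩
  · rintro L _ ⟨L', rfl⟩ j
    simp only [dualRun_append]
    exact (strictMono_potential hd (hc j)).monotone (le_dualRun L' _ j)
  · exact fun T hT => one_le_sum_potential_dualRun hd hc (fun _ => le_rfl) hT (hL T hT)
  · intro L hL
    refine le_mul_OPTfc (by linarith [log_one_add_pos hd]) (fun T hT => (hL T hT).1) ?_
    exact fun x hx => sum_mul_potential_dualRun_zero_le hd hc (fun T hT => (hL T hT).2) hx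

/-- There is a `2 ln(1+d)`-competitive deterministic algorithm for the fractional
online set cover problem: for costs `c_j > 0` and `d ≥ 1`, there exists a deterministic
online fractional algorithm `A` (nonnegative, monotone under prefix extension, and
online feasible on instances whose traces are all nonempty) such that on every finite
list `L` of nonempty traces each of cardinality at most `d` (i.e. each requested
element is contained in at most `d` sets), the weighted cost of `A` on `L` is at most
`2 ln(1+d)` times the weighted fractional optimum of `L`. -/
theorem online_fractional_competitive (m d : ℕ) (hm : 1 ≤ m) (hd : 1 ≤ d)
    (c : Fin m → ℝ) (hc : ∀ j, 0 < c j) :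
    ∃ A : List (Finset (Fin m)) → Fin m → ℝ,
      (∀ L j, 0 ≤ A L j) ∧
      (∀ L L' : List (Finset (Fin m)), L <+: L' → ∀ j, A L j ≤ A L' j) ∧
      (∀ L : List (Finset (Fin m)), (∀ T ∈ L, T.Nonempty) → Feasible m (A L) L) ∧
      ∀ L : List (Finset (Fin m)), (∀ T ∈ L, T.Nonempty ∧ T.card ≤ d) →
        ∑ j, c j * A L j ≤ 2 * Real.log (1 + (d : ℝ)) * OPTfc m c L :=
  online_fractional_competitive_general m d hd c hc
end
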